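/- Let α₁ ∈ ℝ, α₂ > 0, ε > 0 and β ≥ 0, and suppose α₁ > 2 + ε or α₁ < −(2 + ε). Then the polynomial Q has no purely imaginary roots, i.e., Q(iy) ≠ 0 for every real y. -/

import Mathlib

/-- The quartic `Q(z) = z⁴ + (4z/(β+ε))·[(2+ε)(z²+1) + (α₁ − iα₂)(z²−1)]
+ 2((16−β+3ε)/(β+ε))z² + 1`. -/
noncomputable def Q (a1 a2 e b : ℝ) (z : ℂ) : ℂ :=
  z ^ 4
    + (4 * z / ((b : ℂ) + (e : ℂ)))
        * (((2 : ℂ) + (e : ℂ)) * (z ^ 2 + 1) + ((a1 : ℂ) - Complex.I * (a2 : ℂ)) * (z ^ 2 - 1))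
    + 2 * (((16 : ℂ) - (b : ℂ) + 3 * (e : ℂ)) / ((b : ℂ) + (e : ℂ))) * z ^ 2 + 1

/-! On the imaginary axis `z = iy` the terms `z⁴`, `z²` and `α₂ z (z² − 1)` of `Q` are real, so
`Im Q(iy) = 4y((2+ε)(1−y²) − α₁(1+y²))/(β+ε)`. The bracket cannot vanish, since
`|(1−y²)/(1+y²)| ≤ 1 < |α₁|/(2+ε)`; hence a root on the axis must be `0`, but `Q(0) = 1`. -/

theorem Q_zero (a1 a2 e b : ℝ) : Q a1 a2 e b 0 = 1 := by
  simp [Q]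

theorem Q_I_mul (a1 a2 e b y : ℝ) :
    Q a1 a2 e b (Complex.I * y) =
      ((y ^ 4 + 1 - (2 * (16 - b + 3 * e) * y ^ 2 + 4 * a2 * y * (1 + y ^ 2)) / (b + e) : ℝ) : ℂ)
        + ((4 * y * ((2 + e) * (1 - y ^ 2) - a1 * (1 + y ^ 2)) / (b + e) : ℝ) : ℂ) * Complex.I := by
  have hI3 : Complex.I ^ 3 = -Complex.I := by rw [pow_succ, Complex.I_sq]; ring
  simp only [Q]
  push_cast
  ring_nf
  simp only [Complex.I_sq, Complex.I_pow_four, hI3]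
  ring

theorem mul_one_sub_sq_ne_mul_one_add_sq {k a : ℝ} (hk : 0 ≤ k) (ha : k < |a|) (y : ℝ) :
    k * (1 - y ^ 2) ≠ a * (1 + y ^ 2) := by
  intro h
  have hpos : 0 < 1 + y ^ 2 := by positivity
  have : |a| * (1 + y ^ 2) ≤ k * (1 + y ^ 2) := by
    calc |a| * (1 + y ^ 2) = |k * (1 - y ^ 2)| := by rw [h, abs_mul, abs_of_pos hpos]
      _ = k * |1 - y ^ 2| := by rw [abs_mul, abs_of_nonneg hk]
      _ ≤ k * (1 + y ^ 2) := by
        gcongr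
        exact abs_le.mpr ⟨by nlinarith [sq_nonneg y], by nlinarith [sq_nonneg y]⟩
  nlinarith

theorem stmt_11_general (a1 a2 e b : ℝ) (he : 0 < e) (hb : 0 ≤ b)
    (ha1 : 2 + e < a1 ∨ a1 < -(2 + e)) :
    ∀ y : ℝ, Q a1 a2 e b (Complex.I * (y : ℂ)) ≠ 0 := by
  intro y hQ
  have him := congrArg Complex.im hQ
  rw [Q_I_mul, Complex.add_im, Complex.ofReal_im, Complex.mul_I_im, Complex.ofReal_re, zero_add,
    Complex.zero_im, div_eq_zero_iff] at him
  rcases him with hnum | hden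
  · have hbracket : (2 + e) * (1 - y ^ 2) ≠ a1 * (1 + y ^ 2) :=
      mul_one_sub_sq_ne_mul_one_add_sq (by linarith) (lt_abs.mpr (ha1.imp id (by intro; linarith))) y
    have hy : y = 0 := by
      simpa [sub_eq_zero, hbracket] using hnum
    simp [hy, Q_zero] at hQ
  · linarith

/-- For `α₂ > 0`, `ε > 0`, `β ≥ 0` and `α₁ > 2 + ε` or `α₁ < −(2 + ε)`, the polynomial
`Q` has no purely imaginary roots. -/
theorem stmt_11 (a1 a2 e b : ℝ) (ha2 : 0 < a2) (he : 0 < e) (hb : 0 ≤ b)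
    (ha1 : 2 + e < a1 ∨ a1 < -(2 + e)) :
    ∀ y : ℝ, Q a1 a2 e b (Complex.I * (y : ℂ)) ≠ 0 :=
  stmt_11_general a1 a2 e b he hb ha1
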